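/- Conservation of the collapse constraint: Let G : (0,∞) → ℝ be continuously differentiable and let (x_1,…,x_N) be a solution of the point-vortex system with kernel G on [0,T) with no collapse. Then the quantity C(t) = Σ_{i=1}^N Σ_{j≠i} a_i a_j |x_i(t) − x_j(t)|² is constant on [0,T). -/

import Mathlib

open Filter MeasureTheory

noncomputable section

/-- The plane `ℝ²`. -/
abbrev Plane : Type := EuclideanSpace ℝ (Fin 2)

/-- Counterclockwise rotation by `π/2`: `(v₁, v₂)^⊥ = (−v₂, v₁)`. -/
def perp (v : Plane) : Plane := WithLp.toLp 2 ![-v 1, v 0]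

/-- `∇^⊥_y K(|y|) = K'(|y|) y^⊥ / |y|` for a radial kernel profile `K`. -/
def gradPerp (K : ℝ → ℝ) (y : Plane) : Plane := (deriv K ‖y‖ / ‖y‖) • perp y

/-- A solution of the point-vortex system with intensities `a`, kernel profile `G`,
on the time interval `[0, T)`, with no collapse. -/
def IsVortexSolution (N : ℕ) (a : Fin N → ℝ) (G : ℝ → ℝ) (T : ℝ)
    (x : Fin N → ℝ → Plane) : Prop :=
  (∀ t ∈ Set.Ico (0 : ℝ) T, ∀ i j : Fin N, i ≠ j → x i t ≠ x j t) ∧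
  ∀ i : Fin N, ∀ t ∈ Set.Ico (0 : ℝ) T,
    HasDerivWithinAt (x i)
      (∑ j ∈ Finset.univ.erase i, a j • gradPerp G (x i t - x j t))
      (Set.Ico 0 T) t

open Finset

open scoped RealInnerProductSpace

/-!
Write `C = ∑_{i ≠ j} aᵢ aⱼ ‖xᵢ - xⱼ‖²`. Expanding the squares gives
`C = 2 (∑ aᵢ) I - 2 ‖M‖²` with the linear impulse `M = ∑ aᵢ xᵢ` and the angular impulse
`I = ∑ aᵢ ‖xᵢ‖²`. Both are conserved: the interaction `gradPerp G (xᵢ - xⱼ)` is odd in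
`xᵢ - xⱼ` and orthogonal to it, so the double sums giving `M'` and `I'` are antisymmetric
in `(i, j)` and vanish.
-/

lemma perp_neg (v : Plane) : perp (-v) = -perp v := by
  ext i
  fin_cases i <;> simp [perp]

lemma inner_perp_self (v : Plane) : ⟪perp v, v⟫ = 0 := by
  simp only [perp, PiLp.inner_apply, RCLike.inner_apply, Real.ringHom_apply, Fin.sum_univ_two,
    Matrix.cons_val_zero, Matrix.cons_val_one, Matrix.cons_val_fin_one]
  ring

lemma gradPerp_neg (K : ℝ → ℝ) (y : Plane) : gradPerp K (-y) = -gradPerp K y := by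
  simp [gradPerp, perp_neg]

lemma inner_gradPerp_self (K : ℝ → ℝ) (y : Plane) : ⟪gradPerp K y, y⟫ = 0 := by
  rw [gradPerp, real_inner_smul_left, inner_perp_self, mul_zero]

lemma sum_sum_erase_eq_zero_of_antisymm {ι M : Type*} [Fintype ι] [DecidableEq ι]
    [AddCommGroup M] (F : ι → ι → M) (hF : ∀ i j, F j i = -F i j) :
    ∑ i, ∑ j ∈ univ.erase i, F i j = 0 := by
  rw [← sum_finset_product' univ.offDiag univ (fun i => univ.erase i)
    (by simp [ne_comm])]
  refine sum_involution (fun p _ => p.swap) (fun p _ => by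
    rw [Prod.fst_swap, Prod.snd_swap, hF p.1 p.2, add_neg_cancel])
    (fun p hp _ => ?_) (fun p hp => by simpa [ne_comm] using hp) (fun p _ => p.swap_swap)
  obtain ⟨-, -, hne⟩ := mem_offDiag.mp hp
  exact fun h => hne (Prod.ext_iff.mp h).2

theorem Convex.is_const_of_hasDerivWithinAt_zero {E : Type*} [NormedAddCommGroup E]
    [NormedSpace ℝ E] {f : ℝ → E} {s : Set ℝ} (hs : Convex ℝ s)
    (hf : ∀ t ∈ s, HasDerivWithinAt f 0 s t) {t u : ℝ} (ht : t ∈ s) (hu : u ∈ s) :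
    f t = f u := by
  have h := hs.norm_image_sub_le_of_norm_hasDerivWithin_le (C := 0) hf (fun _ _ => by simp) ht hu
  rw [zero_mul, norm_le_zero_iff, sub_eq_zero] at h
  exact h.symm

section Impulses

variable {ι E : Type*} [Fintype ι]

def linearImpulse [AddCommGroup E] [Module ℝ E] (a : ι → ℝ) (p : ι → E) : E :=
  ∑ i, a i • p i

def angularImpulse [NormedAddCommGroup E] (a : ι → ℝ) (p : ι → E) : ℝ :=
  ∑ i, a i * ‖p i‖ ^ 2

lemma sum_sum_erase_mul_norm_sub_sq [DecidableEq ι] [NormedAddCommGroup E]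
    [InnerProductSpace ℝ E] (a : ι → ℝ) (p : ι → E) :
    ∑ i, ∑ j ∈ univ.erase i, a i * a j * ‖p i - p j‖ ^ 2 =
      2 * (∑ i, a i) * angularImpulse a p - 2 * ‖linearImpulse a p‖ ^ 2 := by
  have hdiag (i : ι) : ∑ j ∈ univ.erase i, a i * a j * ‖p i - p j‖ ^ 2 =
      ∑ j, a i * a j * ‖p i - p j‖ ^ 2 :=
    sum_erase _ (by simp)
  have hlin : ‖linearImpulse a p‖ ^ 2 = ∑ i, ∑ j, a i * a j * ⟪p i, p j⟫ := by
    simp only [linearImpulse, ← real_inner_self_eq_norm_sq, sum_inner, inner_sum,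
      real_inner_smul_left, real_inner_smul_right, mul_assoc]
    exact sum_congr rfl fun i _ => sum_congr rfl fun j _ => by rw [real_inner_comm]
  have hterm (i j : ι) : a i * a j * ‖p i - p j‖ ^ 2 =
      a i * ‖p i‖ ^ 2 * a j + a i * (a j * ‖p j‖ ^ 2) - 2 * (a i * a j * ⟪p i, p j⟫) := by
    rw [norm_sub_sq_real]
    ring
  rw [sum_congr rfl fun i _ => hdiag i]
  simp only [hterm, sum_add_distrib, sum_sub_distrib, ← mul_sum, ← sum_mul]
  rw [hlin, angularImpulse]
  ring

end Impulses

section VortexVelocity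

variable {ι : Type*} [Fintype ι] [DecidableEq ι] (a : ι → ℝ) (G : ℝ → ℝ)

def vortexVelocity (p : ι → Plane) (i : ι) : Plane :=
  ∑ j ∈ univ.erase i, a j • gradPerp G (p i - p j)

lemma linearImpulse_vortexVelocity (p : ι → Plane) :
    linearImpulse a (vortexVelocity a G p) = 0 := by
  simp only [linearImpulse, vortexVelocity, smul_sum, smul_smul]
  refine sum_sum_erase_eq_zero_of_antisymm _ fun i j => ?_
  rw [← neg_sub, gradPerp_neg, smul_neg, mul_comm]

lemma sum_mul_inner_vortexVelocity (p : ι → Plane) :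
    ∑ i, a i * ⟪p i, vortexVelocity a G p i⟫ = 0 := by
  simp only [vortexVelocity, inner_sum, real_inner_smul_right, mul_sum]
  refine sum_sum_erase_eq_zero_of_antisymm _ fun i j => ?_
  -- `⟪pᵢ - pⱼ, gradPerp G (pᵢ - pⱼ)⟫ = 0` lets `pᵢ` be traded for `pⱼ`
  have horth := inner_gradPerp_self G (p i - p j)
  rw [inner_sub_right, real_inner_comm, sub_eq_zero] at horth
  rw [← neg_sub, gradPerp_neg, inner_neg_right, real_inner_comm, ← horth]
  ring

variable {a G} {x : ι → ℝ → Plane} {s : Set ℝ} {t : ℝ}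

lemma hasDerivWithinAt_linearImpulse
    (hx : ∀ i, HasDerivWithinAt (x i) (vortexVelocity a G (fun j => x j t) i) s t) :
    HasDerivWithinAt (fun t => linearImpulse a fun i => x i t) 0 s t := by
  rw [← linearImpulse_vortexVelocity a G fun j => x j t]
  exact HasDerivWithinAt.fun_sum fun i _ => (hx i).const_smul (a i)

lemma hasDerivWithinAt_angularImpulse
    (hx : ∀ i, HasDerivWithinAt (x i) (vortexVelocity a G (fun j => x j t) i) s t) :
    HasDerivWithinAt (fun t => angularImpulse a fun i => x i t) 0 s t := by
  have hsum := HasDerivWithinAt.fun_sum fun i (_ : i ∈ univ) => ((hx i).norm_sq).const_mul (a i)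
  have hzero : ∑ i, a i * (2 * ⟪x i t, vortexVelocity a G (fun j => x j t) i⟫) = 0 := by
    simp only [mul_left_comm (a _), ← mul_sum, sum_mul_inner_vortexVelocity, mul_zero]
  rwa [hzero] at hsum

end VortexVelocity

theorem collapse_constraint_conservation_general
    (N : ℕ) (a : Fin N → ℝ)
    (G : ℝ → ℝ)
    (T : ℝ) (x : Fin N → ℝ → Plane)
    (hsol : IsVortexSolution N a G T x) :
    ∀ t ∈ Set.Ico (0 : ℝ) T,
      (∑ i : Fin N, ∑ j ∈ Finset.univ.erase i, a i * a j * ‖x i t - x j t‖ ^ 2) =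
      (∑ i : Fin N, ∑ j ∈ Finset.univ.erase i, a i * a j * ‖x i 0 - x j 0‖ ^ 2) := by
  intro t ht
  have h0 : (0 : ℝ) ∈ Set.Ico 0 T := ⟨le_rfl, ht.1.trans_lt ht.2⟩
  have hflow (u : ℝ) (hu : u ∈ Set.Ico 0 T) (i : Fin N) :
      HasDerivWithinAt (x i) (vortexVelocity a G (fun j => x j u) i) (Set.Ico 0 T) u :=
    hsol.2 i u hu
  have hM : linearImpulse a (fun i => x i t) = linearImpulse a (fun i => x i 0) :=
    (convex_Ico 0 T).is_const_of_hasDerivWithinAt_zero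
      (fun u hu => hasDerivWithinAt_linearImpulse (hflow u hu)) ht h0
  have hI : angularImpulse a (fun i => x i t) = angularImpulse a (fun i => x i 0) :=
    (convex_Ico 0 T).is_const_of_hasDerivWithinAt_zero
      (fun u hu => hasDerivWithinAt_angularImpulse (hflow u hu)) ht h0
  rw [sum_sum_erase_mul_norm_sub_sq a (fun i => x i t),
    sum_sum_erase_mul_norm_sub_sq a (fun i => x i 0), hM, hI]

/-- Conservation of the collapse constraint
`C(t) = Σ_i Σ_{j≠i} a_i a_j |x_i(t) − x_j(t)|²` along a collapse-free solution of the
point-vortex system with a kernel `G` that is `C¹` on `(0, ∞)`. -/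
theorem collapse_constraint_conservation
    (N : ℕ) (a : Fin N → ℝ) (ha : ∀ i, a i ≠ 0)
    (G : ℝ → ℝ) (hG : ContDiffOn ℝ 1 G (Set.Ioi 0))
    (T : ℝ) (x : Fin N → ℝ → Plane)
    (hsol : IsVortexSolution N a G T x) :
    ∀ t ∈ Set.Ico (0 : ℝ) T,
      (∑ i : Fin N, ∑ j ∈ Finset.univ.erase i, a i * a j * ‖x i t - x j t‖ ^ 2) =
      (∑ i : Fin N, ∑ j ∈ Finset.univ.erase i, a i * a j * ‖x i 0 - x j 0‖ ^ 2) :=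
  collapse_constraint_conservation_general N a G T x hsol
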